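/- Let I ⊆ ℝ be an open interval, a, b, f₄ : ℝ → ℝ, let E be differentiable on I with E'(x) = f₄(x)/2 + b(x), let J be differentiable on I with J(x) ≠ 0 and J'(x) = 2a(x)·exp(−E(x)), and define c(x) = f₄(x)·exp(−E(x)) / J(x). Let B be differentiable on I with B'(x) = f₄(x) + b(x), and G differentiable on I with G'(x) = c(x)·exp(B(x)). Then for every constant C₁₃ ∈ ℝ, the function y(x) = (1/2)·J(x)·exp(E(x)) + exp(B(x))/(C₁₃ − G(x)) satisfies y'(x) = a(x) + b(x)y(x) + c(x)y(x)² at every x ∈ I with C₁₃ − G(x) ≠ 0. -/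

import Mathlib

/-!
`u = J·exp E / 2` is a particular solution: since `c·u = f₄/2`, the term `c u²` is exactly the
`f₄/2 · u` in `u' = a + (f₄/2 + b)·u`. Writing `y = u + v` turns the Riccati equation into the
Bernoulli equation `v' = (b + 2cu)·v + c v² = B'·v + c v²`, whose solutions are
`exp B / (C₁₃ - G)` with `G' = c·exp B`.
-/

open Real

theorem HasDerivAt.riccati_add {u v : ℝ → ℝ} {a b c x : ℝ}
    (hu : HasDerivAt u (a + b * u x + c * u x ^ 2) x)
    (hv : HasDerivAt v ((b + 2 * c * u x) * v x + c * v x ^ 2) x) :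
    HasDerivAt (fun t => u t + v t) (a + b * (u x + v x) + c * (u x + v x) ^ 2) x :=
  (hu.add hv).congr_deriv (by ring)

theorem hasDerivAt_exp_div_const_sub {B G : ℝ → ℝ} {β c C x : ℝ}
    (hB : HasDerivAt B β x) (hG : HasDerivAt G (c * exp (B x)) x) (hD : C - G x ≠ 0) :
    HasDerivAt (fun t => exp (B t) / (C - G t))
      (β * (exp (B x) / (C - G x)) + c * (exp (B x) / (C - G x)) ^ 2) x := by
  refine (hB.exp.fun_div (hG.const_sub C) hD).congr_deriv ?_
  field_simp
  ring

theorem mul_half_mul_exp_of_eq_div {E J : ℝ → ℝ} {f c x : ℝ}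
    (hJ : J x ≠ 0) (hc : c = f * exp (-E x) / J x) :
    c * (1 / 2 * J x * exp (E x)) = f / 2 := by
  rw [hc, exp_neg]
  field_simp

theorem hasDerivAt_half_mul_exp_riccati {E J : ℝ → ℝ} {a b c f x : ℝ}
    (hE : HasDerivAt E (f / 2 + b) x) (hJ : HasDerivAt J (2 * a * exp (-E x)) x)
    (hJne : J x ≠ 0) (hc : c = f * exp (-E x) / J x) :
    HasDerivAt (fun t => 1 / 2 * J t * exp (E t))
      (a + b * (1 / 2 * J x * exp (E x)) + c * (1 / 2 * J x * exp (E x)) ^ 2) x := by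
  have hcu := mul_half_mul_exp_of_eq_div hJne hc
  refine ((hJ.const_mul (1 / 2)).fun_mul hE.exp).congr_deriv ?_
  have hexp : exp (-E x) * exp (E x) = 1 := by rw [← exp_add, neg_add_cancel, exp_zero]
  linear_combination a * hexp - (1 / 2 * J x * exp (E x)) * hcu

/-- Theorem 9 (Case 9): with `E' = f₄/2 + b`, `J ≠ 0`, `J' = 2a · exp(−E)`,
`c = f₄ · exp(−E)/J`, `B' = f₄ + b` and `G' = c · exp B`, the function
`y = (1/2)·J·exp E + exp B / (C₁₃ − G)` solves the Riccati equation wherever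
`C₁₃ − G ≠ 0`. -/
theorem riccati_case9_general
    (p q : ℝ) (a b c f₄ E J B G : ℝ → ℝ)
    (hE : ∀ x ∈ Set.Ioo p q, HasDerivAt E (f₄ x / 2 + b x) x)
    (hJne : ∀ x ∈ Set.Ioo p q, J x ≠ 0)
    (hJ : ∀ x ∈ Set.Ioo p q, HasDerivAt J (2 * a x * Real.exp (-E x)) x)
    (hcdef : ∀ x ∈ Set.Ioo p q, c x = f₄ x * Real.exp (-E x) / J x)
    (hB : ∀ x ∈ Set.Ioo p q, HasDerivAt B (f₄ x + b x) x)
    (hG : ∀ x ∈ Set.Ioo p q, HasDerivAt G (c x * Real.exp (B x)) x)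
    (C₁₃ : ℝ) :
    ∀ x ∈ Set.Ioo p q, C₁₃ - G x ≠ 0 →
      HasDerivAt (fun t =>
          (1 / 2) * J t * Real.exp (E t) + Real.exp (B t) / (C₁₃ - G t))
        (a x + b x * ((1 / 2) * J x * Real.exp (E x)
            + Real.exp (B x) / (C₁₃ - G x))
          + c x * ((1 / 2) * J x * Real.exp (E x)
            + Real.exp (B x) / (C₁₃ - G x)) ^ 2) x := by
  intro x hx hD
  have hu := hasDerivAt_half_mul_exp_riccati (hE x hx) (hJ x hx) (hJne x hx) (hcdef x hx)
  have hcu := mul_half_mul_exp_of_eq_div (hJne x hx) (hcdef x hx)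
  have hcoeff : b x + 2 * c x * (1 / 2 * J x * exp (E x)) = f₄ x + b x := by
    linear_combination 2 * hcu
  have hv := hasDerivAt_exp_div_const_sub (hB x hx) (hG x hx) hD
  rw [← hcoeff] at hv
  exact hu.riccati_add hv
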